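/- Let U ⊆ ℝ² be open, ψ : U → ℝ be C³ with ψ_y < 0 on U, satisfying Δψ = -γ(ψ) for a C¹ function γ with γ ≤ 0 on the range of ψ. Define R = ½|∇ψ|² + g·y - ½Q + Γ̂(ψ) with g > 0 and Γ̂(s) = ∫₀ˢ γ(t) dt. Then R has no interior local maximum in U: there is no point A ∈ U with ∇R(A) = 0 and ΔR(A) ≤ 0. -/

import Mathlib

/-! At a critical point of `R`, eliminating `γ(ψ)` with the equation turns `∇R = 0` into
`ψ_y ψ_xy = ψ_x ψ_yy` and `ψ_x ψ_xy = ψ_y ψ_xx - g`. Differentiating the equation gives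
`∇Δψ = -γ'(ψ) ∇ψ`, and with it `ΔR = |D²ψ|² - (Δψ)² = -2 det D²ψ`. So `ΔR ≤ 0` would mean
`det D²ψ ≥ 0`, while `tr D²ψ = -γ(ψ) ≥ 0`. The two gradient relations give
`ψ_y² det D²ψ = g ψ_y ψ_yy`, hence `ψ_yy ≤ 0` because `ψ_y < 0` and `g > 0`; a nonnegative
determinant then forces `ψ_xx + ψ_yy < 0`, a contradiction. -/

open Set

noncomputable def px (f : ℝ × ℝ → ℝ) (p : ℝ × ℝ) : ℝ := deriv (fun t => f (t, p.2)) p.1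

noncomputable def py (f : ℝ × ℝ → ℝ) (p : ℝ × ℝ) : ℝ := deriv (fun t => f (p.1, t)) p.2

noncomputable def Rfun (ψ : ℝ × ℝ → ℝ) (γ : ℝ → ℝ) (g Q : ℝ) : ℝ × ℝ → ℝ :=
  fun p => ((px ψ p) ^ 2 + (py ψ p) ^ 2) / 2 + g * p.2 - Q / 2 + ∫ t in (0:ℝ)..(ψ p), γ t

open Filter Topology

section PartialDerivatives

variable {f : ℝ × ℝ → ℝ} {p : ℝ × ℝ}

theorem hasDerivAt_fderiv_fst (hf : DifferentiableAt ℝ f p) :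
    HasDerivAt (fun t => f (t, p.2)) (fderiv ℝ f p (1, 0)) p.1 :=
  hf.hasFDerivAt.comp_hasDerivAt_of_eq p.1 ((hasDerivAt_id p.1).prodMk (hasDerivAt_const _ _)) rfl

theorem hasDerivAt_fderiv_snd (hf : DifferentiableAt ℝ f p) :
    HasDerivAt (fun t => f (p.1, t)) (fderiv ℝ f p (0, 1)) p.2 :=
  hf.hasFDerivAt.comp_hasDerivAt_of_eq p.2 ((hasDerivAt_const _ _).prodMk (hasDerivAt_id p.2)) rfl

theorem px_eq_fderiv (hf : DifferentiableAt ℝ f p) : px f p = fderiv ℝ f p (1, 0) :=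
  (hasDerivAt_fderiv_fst hf).deriv

theorem py_eq_fderiv (hf : DifferentiableAt ℝ f p) : py f p = fderiv ℝ f p (0, 1) :=
  (hasDerivAt_fderiv_snd hf).deriv

theorem DifferentiableAt.hasDerivAt_px (hf : DifferentiableAt ℝ f p) :
    HasDerivAt (fun t => f (t, p.2)) (px f p) p.1 :=
  px_eq_fderiv hf ▸ hasDerivAt_fderiv_fst hf

theorem DifferentiableAt.hasDerivAt_py (hf : DifferentiableAt ℝ f p) :
    HasDerivAt (fun t => f (p.1, t)) (py f p) p.2 :=
  py_eq_fderiv hf ▸ hasDerivAt_fderiv_snd hf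

theorem px_eq_fun_fderiv (hf : Differentiable ℝ f) : px f = fun q => fderiv ℝ f q (1, 0) :=
  funext fun q => px_eq_fderiv (hf q)

theorem py_eq_fun_fderiv (hf : Differentiable ℝ f) : py f = fun q => fderiv ℝ f q (0, 1) :=
  funext fun q => py_eq_fderiv (hf q)

theorem contDiff_px {n : WithTop ℕ∞} (hf : ContDiff ℝ (n + 1) f) : ContDiff ℝ n (px f) := by
  rw [px_eq_fun_fderiv (hf.differentiable (by simp))]
  exact (hf.fderiv_right le_rfl).clm_apply contDiff_const

theorem contDiff_py {n : WithTop ℕ∞} (hf : ContDiff ℝ (n + 1) f) : ContDiff ℝ n (py f) := by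
  rw [py_eq_fun_fderiv (hf.differentiable (by simp))]
  exact (hf.fderiv_right le_rfl).clm_apply contDiff_const

theorem px_py_comm (hf : ContDiff ℝ 2 f) : px (py f) = py (px f) := by
  ext q
  have hd := hf.differentiable (by simp)
  have hd2 : Differentiable ℝ (fderiv ℝ f) :=
    (hf.fderiv_right (m := 1) (by norm_num)).differentiable (by simp)
  have hslice (v : ℝ × ℝ) : DifferentiableAt ℝ (fun q => fderiv ℝ f q v) q := by fun_prop
  rw [px_eq_fun_fderiv hd, py_eq_fun_fderiv hd, px_eq_fderiv (hslice _), py_eq_fderiv (hslice _),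
    fderiv_clm_apply (hd2 q) (differentiableAt_const _),
    fderiv_clm_apply (hd2 q) (differentiableAt_const _)]
  simpa using (hf.contDiffAt.isSymmSndFDerivAt (by simp)) (1, 0) (0, 1)

theorem px_congr_of_eventuallyEq {h : ℝ × ℝ → ℝ} (hfh : f =ᶠ[𝓝 p] h) : px f p = px h p :=
  EventuallyEq.deriv_eq <|
    (continuous_id.prodMk continuous_const).continuousAt.tendsto.eventually hfh

theorem py_congr_of_eventuallyEq {h : ℝ × ℝ → ℝ} (hfh : f =ᶠ[𝓝 p] h) : py f p = py h p :=
  EventuallyEq.deriv_eq <|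
    (continuous_const.prodMk continuous_id).continuousAt.tendsto.eventually hfh

end PartialDerivatives

section Rfun

variable {ψ : ℝ × ℝ → ℝ} {γ : ℝ → ℝ}

theorem differentiable_px (hf : ContDiff ℝ 2 ψ) : Differentiable ℝ (px ψ) :=
  (contDiff_px (n := 1) hf).differentiable one_ne_zero

theorem differentiable_py (hf : ContDiff ℝ 2 ψ) : Differentiable ℝ (py ψ) :=
  (contDiff_py (n := 1) hf).differentiable one_ne_zero

theorem px_Rfun (g Q : ℝ) (hψ : ContDiff ℝ 2 ψ) (hγ : Continuous γ) :
    px (Rfun ψ γ g Q) =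
      fun p => px ψ p * px (px ψ) p + py ψ p * px (py ψ) p + γ (ψ p) * px ψ p := by
  ext p
  have hΓ := (hγ.integral_hasStrictDerivAt 0 (ψ p)).hasDerivAt.comp p.1
    (hψ.differentiable two_ne_zero p).hasDerivAt_px
  refine HasDerivAt.deriv ?_
  refine (((((differentiable_px hψ p).hasDerivAt_px.pow 2).add
    ((differentiable_py hψ p).hasDerivAt_px.pow 2)).div_const 2).add_const (g * p.2)).sub_const
      (Q / 2) |>.add hΓ |>.congr_deriv ?_
  simp only [Prod.mk.eta]
  ring

theorem py_Rfun (g Q : ℝ) (hψ : ContDiff ℝ 2 ψ) (hγ : Continuous γ) :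
    py (Rfun ψ γ g Q) =
      fun p => px ψ p * py (px ψ) p + py ψ p * py (py ψ) p + g + γ (ψ p) * py ψ p := by
  ext p
  have hΓ := (hγ.integral_hasStrictDerivAt 0 (ψ p)).hasDerivAt.comp p.2
    (hψ.differentiable two_ne_zero p).hasDerivAt_py
  refine HasDerivAt.deriv ?_
  refine (((((differentiable_px hψ p).hasDerivAt_py.pow 2).add
    ((differentiable_py hψ p).hasDerivAt_py.pow 2)).div_const 2).add
      ((hasDerivAt_id p.2).const_mul g)).sub_const (Q / 2) |>.add hΓ |>.congr_deriv ?_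
  simp only [Prod.mk.eta]
  ring

theorem px_px_Rfun (g Q : ℝ) (hψ : ContDiff ℝ 3 ψ) (hγ : Differentiable ℝ γ) (p : ℝ × ℝ) :
    px (px (Rfun ψ γ g Q)) p = px (px ψ) p ^ 2 + px ψ p * px (px (px ψ)) p +
      px (py ψ) p ^ 2 + py ψ p * px (px (py ψ)) p +
      deriv γ (ψ p) * px ψ p ^ 2 + γ (ψ p) * px (px ψ) p := by
  have hψ2 : ContDiff ℝ 2 ψ := hψ.of_le (by norm_num)
  have hψx := (differentiable_px hψ2 p).hasDerivAt_px
  have hψy := (differentiable_py hψ2 p).hasDerivAt_px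
  have hγψ := (hγ (ψ p)).hasDerivAt.comp p.1 (hψ2.differentiable two_ne_zero p).hasDerivAt_px
  rw [px_Rfun g Q hψ2 hγ.continuous]
  refine HasDerivAt.deriv ?_
  refine (hψx.mul (differentiable_px (contDiff_px (n := 2) hψ) p).hasDerivAt_px).add
    (hψy.mul (differentiable_px (contDiff_py (n := 2) hψ) p).hasDerivAt_px) |>.add
    (hγψ.mul hψx) |>.congr_deriv ?_
  simp only [Function.comp_apply, Prod.mk.eta]
  ring

theorem py_py_Rfun (g Q : ℝ) (hψ : ContDiff ℝ 3 ψ) (hγ : Differentiable ℝ γ) (p : ℝ × ℝ) :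
    py (py (Rfun ψ γ g Q)) p = py (px ψ) p ^ 2 + px ψ p * py (py (px ψ)) p +
      py (py ψ) p ^ 2 + py ψ p * py (py (py ψ)) p +
      deriv γ (ψ p) * py ψ p ^ 2 + γ (ψ p) * py (py ψ) p := by
  have hψ2 : ContDiff ℝ 2 ψ := hψ.of_le (by norm_num)
  have hψx := (differentiable_px hψ2 p).hasDerivAt_py
  have hψy := (differentiable_py hψ2 p).hasDerivAt_py
  have hγψ := (hγ (ψ p)).hasDerivAt.comp p.2 (hψ2.differentiable two_ne_zero p).hasDerivAt_py
  rw [py_Rfun g Q hψ2 hγ.continuous]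
  refine HasDerivAt.deriv ?_
  refine ((hψx.mul (differentiable_py (contDiff_px (n := 2) hψ) p).hasDerivAt_py).add
    (hψy.mul (differentiable_py (contDiff_py (n := 2) hψ) p).hasDerivAt_py)).add_const g |>.add
    (hγψ.mul hψy) |>.congr_deriv ?_
  simp only [Function.comp_apply, Prod.mk.eta]
  ring

variable {U : Set (ℝ × ℝ)}

theorem px_laplacian_of_pde (hU : IsOpen U) (hψ : ContDiff ℝ 3 ψ) (hγ : Differentiable ℝ γ)
    (hpde : ∀ p ∈ U, px (px ψ) p + py (py ψ) p = -γ (ψ p)) {p : ℝ × ℝ} (hp : p ∈ U) :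
    px (px (px ψ)) p + px (py (py ψ)) p = -(deriv γ (ψ p) * px ψ p) :=
  calc px (px (px ψ)) p + px (py (py ψ)) p
      = px (fun q => px (px ψ) q + py (py ψ) q) p :=
        ((differentiable_px (contDiff_px (n := 2) hψ) p).hasDerivAt_px.add
          (differentiable_py (contDiff_py (n := 2) hψ) p).hasDerivAt_px).deriv.symm
    _ = px (fun q => -γ (ψ q)) p :=
        px_congr_of_eventuallyEq (eventually_of_mem (hU.mem_nhds hp) hpde)
    _ = -(deriv γ (ψ p) * px ψ p) :=
        ((hγ (ψ p)).hasDerivAt.comp p.1 (hψ.differentiable (by norm_num) p).hasDerivAt_px).neg.deriv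

theorem py_laplacian_of_pde (hU : IsOpen U) (hψ : ContDiff ℝ 3 ψ) (hγ : Differentiable ℝ γ)
    (hpde : ∀ p ∈ U, px (px ψ) p + py (py ψ) p = -γ (ψ p)) {p : ℝ × ℝ} (hp : p ∈ U) :
    py (px (px ψ)) p + py (py (py ψ)) p = -(deriv γ (ψ p) * py ψ p) :=
  calc py (px (px ψ)) p + py (py (py ψ)) p
      = py (fun q => px (px ψ) q + py (py ψ) q) p :=
        ((differentiable_px (contDiff_px (n := 2) hψ) p).hasDerivAt_py.add
          (differentiable_py (contDiff_py (n := 2) hψ) p).hasDerivAt_py).deriv.symm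
    _ = py (fun q => -γ (ψ q)) p :=
        py_congr_of_eventuallyEq (eventually_of_mem (hU.mem_nhds hp) hpde)
    _ = -(deriv γ (ψ p) * py ψ p) :=
        ((hγ (ψ p)).hasDerivAt.comp p.2 (hψ.differentiable (by norm_num) p).hasDerivAt_py).neg.deriv

theorem laplacian_Rfun_of_pde (g Q : ℝ) (hU : IsOpen U) (hψ : ContDiff ℝ 3 ψ)
    (hγ : Differentiable ℝ γ) (hpde : ∀ p ∈ U, px (px ψ) p + py (py ψ) p = -γ (ψ p))
    {p : ℝ × ℝ} (hp : p ∈ U) :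
    px (px (Rfun ψ γ g Q)) p + py (py (Rfun ψ γ g Q)) p =
      2 * (px (py ψ) p ^ 2 - px (px ψ) p * py (py ψ) p) := by
  have hψ2 : ContDiff ℝ 2 ψ := hψ.of_le (by norm_num)
  have hxy : py (px ψ) = px (py ψ) := (px_py_comm hψ2).symm
  have hxxy : px (px (py ψ)) = py (px (px ψ)) := by
    rw [px_py_comm hψ2, px_py_comm (contDiff_px (n := 2) hψ)]
  have hxyy : py (px (py ψ)) = px (py (py ψ)) := (px_py_comm (contDiff_py (n := 2) hψ)).symm
  rw [px_px_Rfun g Q hψ hγ, py_py_Rfun g Q hψ hγ, hxy, hxxy, hxyy]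
  linear_combination px ψ p * px_laplacian_of_pde hU hψ hγ hpde hp +
    py ψ p * py_laplacian_of_pde hU hψ hγ hpde hp + (px (px ψ) p + py (py ψ) p) * hpde p hp

end Rfun

/-- `(a b; b c)` plays the Hessian of `ψ` and `(p, q)` its gradient at a critical point of `R`. -/
theorem mul_lt_sq_of_critical {p q a b c g : ℝ} (hg : 0 < g) (hq : q < 0) (htr : 0 ≤ a + c)
    (hx : q * b = p * c) (hy : p * b = q * a - g) : a * c < b ^ 2 := by
  by_contra! hdet
  have key : q ^ 2 * (a * c - b ^ 2) = g * (q * c) := by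
    linear_combination (-(q * b) - p * c) * hx - c * (q * hy - p * hx)
  have hqc : 0 ≤ q * c := by
    nlinarith [mul_nonneg (sq_nonneg q) (sub_nonneg.mpr hdet)]
  have hc : c ≤ 0 := by nlinarith
  rcases hc.lt_or_eq with hc | rfl
  · nlinarith [sq_nonneg b]
  · have hb : b = 0 := by nlinarith [sq_nonneg b]
    subst hb
    nlinarith

theorem stmt3 (ψ : ℝ × ℝ → ℝ) (γ : ℝ → ℝ) (g Q : ℝ) (U : Set (ℝ × ℝ)) (hU : IsOpen U)
    (hψ : ContDiff ℝ 3 ψ) (hγ : ContDiff ℝ 1 γ) (hg : 0 < g)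
    (hpde : ∀ p ∈ U, px (px ψ) p + py (py ψ) p = -γ (ψ p))
    (hψy : ∀ p ∈ U, py ψ p < 0)
    (hγneg : ∀ p ∈ U, γ (ψ p) ≤ 0) :
    ¬ ∃ A ∈ U,
        px (Rfun ψ γ g Q) A = 0 ∧ py (Rfun ψ γ g Q) A = 0 ∧
        px (px (Rfun ψ γ g Q)) A + py (py (Rfun ψ γ g Q)) A ≤ 0 := by
  rintro ⟨A, hA, hRx, hRy, hΔ⟩
  have hψ2 : ContDiff ℝ 2 ψ := hψ.of_le (by norm_num)
  have hγ' : Differentiable ℝ γ := hγ.differentiable one_ne_zero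
  rw [px_Rfun g Q hψ2 hγ'.continuous] at hRx
  rw [py_Rfun g Q hψ2 hγ'.continuous, ← px_py_comm hψ2] at hRy
  rw [laplacian_Rfun_of_pde g Q hU hψ hγ' hpde hA] at hΔ
  have hΔψ := hpde A hA
  have hdet := mul_lt_sq_of_critical (p := px ψ A) (a := px (px ψ) A) (b := px (py ψ) A)
    (c := py (py ψ) A) hg (hψy A hA) (by linarith [hγneg A hA])
    (by linear_combination hRx - px ψ A * hΔψ) (by linear_combination hRy - py ψ A * hΔψ)
  linarith
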